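/- arXiv:2205.05405 — 3 statements merged into one kernel-verified Lean document; each statement's English description precedes it below -/
import Mathlib

section
/- Let Θ be a metric space with metric d, let (Ω, 𝒜, ℙ) be a probability space, let M_n : Ω × Θ → ℝ be stochastic processes indexed by Θ, and let M : Θ → ℝ be a deterministic function. Suppose: (1) sup_{θ ∈ Θ} |M_n(θ) − M(θ)| → 0 in probability; (2) there exists θ_0 ∈ Θ such that M(θ_0) > sup_{θ ∉ G} M(θ) for every open set G containing θ_0; and (3) θ̂_n : Ω → Θ are random elements satisfying M_n(θ̂_n) ≥ sup_{θ ∈ Θ} M_n(θ) − ε_n, where ε_n ≥ 0 are random variables converging to 0 in probability. Then d(θ̂_n, θ_0) → 0 in probability. -/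
open MeasureTheory Matrix Filter Topology Finset Real

noncomputable section

/-- The `p`-variate normal density `φ_p(x, μ, Σ)`. -/
def mvnpdf (p : ℕ) (x μ : Fin p → ℝ) (S : Matrix (Fin p) (Fin p) ℝ) : ℝ :=
  (2 * π) ^ (-(p : ℝ) / 2) * S.det ^ (-(1 : ℝ) / 2) *
    Real.exp (-(1 / 2) * ((x - μ) ⬝ᵥ (S⁻¹ *ᵥ (x - μ))))

/-- A (generalized) mixture parameter `θ = (π₁,…,π_k, μ₁,…,μ_k, Σ₁,…,Σ_k)`. -/
abbrev MixParam (p k : ℕ) :=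
  (Fin k → ℝ) × (Fin k → Fin p → ℝ) × (Fin k → Matrix (Fin p) (Fin p) ℝ)

/-- `D_j(x, θ) = π_j φ_p(x, μ_j, Σ_j)`. -/
def Dj (p k : ℕ) (θ : MixParam p k) (x : Fin p → ℝ) (j : Fin k) : ℝ :=
  θ.1 j * mvnpdf p x (θ.2.1 j) (θ.2.2 j)

/-- `D_j(x,θ) = D(x,θ) = max_i D_i(x,θ)`, i.e. the `j`-th component attains the maximum. -/
def IsArgMax (p k : ℕ) (θ : MixParam p k) (x : Fin p → ℝ) (j : Fin k) : Prop :=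
  ∀ i, Dj p k θ x i ≤ Dj p k θ x j

open Classical in
/-- The assignment function `Z_j(x,θ) = 1{D_j(x,θ) = D(x,θ)}`. -/
def Zj (p k : ℕ) (θ : MixParam p k) (x : Fin p → ℝ) (j : Fin k) : ℝ :=
  if IsArgMax p k θ x j then 1 else 0

/-- `∫_{ℝ^p} φ_p(x, μ, Σ)^{1+β} dx`. -/
def Jint (p : ℕ) (β : ℝ) (μ : Fin p → ℝ) (S : Matrix (Fin p) (Fin p) ℝ) : ℝ :=
  ∫ x : Fin p → ℝ, mvnpdf p x μ S ^ (1 + β)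

open Classical in
/-- The integrand `m_θ(x)` of the pseudo β-likelihood, with the convention that a summand
is `0` whenever `Z_j(x,θ) = 0`. -/
def mfun (p k : ℕ) (β : ℝ) (θ : MixParam p k) (x : Fin p → ℝ) : ℝ :=
  ∑ j : Fin k,
    if IsArgMax p k θ x j then
      Real.log (θ.1 j) + (1 / β) * mvnpdf p x (θ.2.1 j) (θ.2.2 j) ^ β
        - (1 / (1 + β)) * Jint p β (θ.2.1 j) (θ.2.2 j)
    else 0

/-- The pseudo β-likelihood `L_β(θ, P) = E_P[m_θ(X)]`. -/
def Lbeta (p k : ℕ) (β : ℝ) (θ : MixParam p k) (P : Measure (Fin p → ℝ)) : ℝ :=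
  ∫ x, mfun p k β θ x ∂P

/-- The empirical pseudo β-likelihood `L_β(θ, F_n)` based on observations `xs 0, …, xs (n-1)`. -/
def Lemp (p k : ℕ) (β : ℝ) (θ : MixParam p k) (n : ℕ) (xs : ℕ → Fin p → ℝ) : ℝ :=
  (1 / (n : ℝ)) * ∑ i ∈ Finset.range n, mfun p k β θ (xs i)

/-- `θ` is a genuine mixture parameter: weights in `[0,1]` summing to `1`, and symmetric
positive definite dispersion matrices. -/
def IsMixParam (p k : ℕ) (θ : MixParam p k) : Prop :=
  (∀ j, 0 ≤ θ.1 j ∧ θ.1 j ≤ 1) ∧ (∑ j, θ.1 j) = 1 ∧ ∀ j, (θ.2.2 j).PosDef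

/-- The constrained parameter space `Θ_C`: every eigenvalue of every `Σ_j` is at least `c₁`
(NS constraint) and the ratio of any two eigenvalues is at most `c` (ER constraint `M/m ≤ c`). -/
def InThetaC (p k : ℕ) (c c₁ : ℝ) (θ : MixParam p k) : Prop :=
  IsMixParam p k θ ∧
    (∀ j (h : (θ.2.2 j).IsHermitian) i, c₁ ≤ h.eigenvalues i) ∧
    (∀ j (h : (θ.2.2 j).IsHermitian) i j' (h' : (θ.2.2 j').IsHermitian) i',
      h.eigenvalues i ≤ c * h'.eigenvalues i')

/-- The `k`-component `p`-variate normal mixture measure `Σ_j w_j N_p(μ_j, Σ_j)`. -/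
def mixMeasure (p k : ℕ) (w : Fin k → ℝ) (μ : Fin k → Fin p → ℝ)
    (S : Fin k → Matrix (Fin p) (Fin p) ℝ) : Measure (Fin p → ℝ) :=
  volume.withDensity fun x => ENNReal.ofReal (∑ j, w j * mvnpdf p x (μ j) (S j))

/-- Assumption 1: `max_j π⁰_j ≥ (1+k⁰) β/(1+β)^{1+p/2}` for some `k⁰ > 0`. -/
def Assumption1 (p k : ℕ) (β : ℝ) (w0 : Fin k → ℝ) : Prop :=
  ∃ k0 > 0, ∃ j0 : Fin k, (∀ j, w0 j ≤ w0 j0) ∧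
    (1 + k0) * β / (1 + β) ^ (1 + (p : ℝ) / 2) ≤ w0 j0

/-- The Euclidean distance on the parameter space
`ℝ^k × (ℝ^p)^k × (ℝ^{p×p})^k`. -/
def paramDist (p k : ℕ) (θ θ' : MixParam p k) : ℝ :=
  Real.sqrt ((∑ j, (θ.1 j - θ'.1 j) ^ 2) + (∑ j, ∑ i, (θ.2.1 j i - θ'.2.1 j i) ^ 2)
    + (∑ j, ∑ i, ∑ i', (θ.2.2 j i i' - θ'.2.2 j i i') ^ 2))

end

/-!
If `θ̂ₙ` lies outside the ball `B(θ₀, ε)`, well-separation gives `M θ̂ₙ ≤ b < M θ₀`. With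
`δ = (M θ₀ - b) / 3`, the event `{d(θ̂ₙ, θ₀) ≥ ε}` therefore forces either
`sup_θ |Mₙ θ - M θ| ≥ δ` or `εₙ ≥ δ`: otherwise near-maximality would give
`M θ₀ - 3δ < M θ̂ₙ`. Both of those events have vanishing probability.
-/

theorem sub_three_mul_lt_of_forall_abs_sub_lt {α : Type*} {f g : α → ℝ} {x y : α} {e δ : ℝ}
    (hclose : ∀ z, |f z - g z| < δ) (hnear : f x ≤ f y + e) (he : e < δ) :
    g x - 3 * δ < g y := by
  have hx := abs_lt.mp (hclose x)
  have hy := abs_lt.mp (hclose y)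
  linarith [hx.1, hy.2]

theorem tendsto_measure_of_subset_union {Ω ι : Type*} [MeasurableSpace Ω] {μ : Measure Ω}
    {l : Filter ι} {A B C : ι → Set Ω} (hA : Tendsto (fun i => μ (A i)) l (𝓝 0))
    (hB : Tendsto (fun i => μ (B i)) l (𝓝 0)) (hsub : ∀ i, C i ⊆ A i ∪ B i) :
    Tendsto (fun i => μ (C i)) l (𝓝 0) := by
  have hAB : Tendsto (fun i => μ (A i) + μ (B i)) l (𝓝 0) := by
    simpa using hA.add hB
  exact tendsto_of_tendsto_of_tendsto_of_le_of_le tendsto_const_nhds hAB (fun _ => zero_le)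
    fun i => (measure_mono (hsub i)).trans (measure_union_le _ _)

theorem argmax_consistency_general
    {Θ : Type*} [MetricSpace Θ] {Ω : Type*} [MeasurableSpace Ω]
    (P : Measure Ω)
    (Mn : ℕ → Ω → Θ → ℝ) (M : Θ → ℝ) (θ0 : Θ)
    (θhat : ℕ → Ω → Θ) (εn : ℕ → Ω → ℝ)
    -- (1) uniform convergence in probability: `sup_θ |M_n(θ) − M(θ)| → 0` in probability
    (h1 : ∀ ε > (0 : ℝ),
      Tendsto (fun n => P {ω | ∃ θ, ε ≤ |Mn n ω θ - M θ|}) atTop (𝓝 0))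
    -- (2) well-separated maximum: `M(θ0) > sup_{θ ∉ G} M(θ)` for every open `G ∋ θ0`
    (h2 : ∀ G : Set Θ, IsOpen G → θ0 ∈ G → ∃ b < M θ0, ∀ θ ∉ G, M θ ≤ b)
    -- (3) near-maximization: `M_n(θ̂_n) ≥ sup_θ M_n(θ) − ε_n` with `ε_n ≥ 0`, `ε_n → 0` in prob.
    (h3 : ∀ n ω θ, Mn n ω θ ≤ Mn n ω (θhat n ω) + εn n ω)
    (h3tend : ∀ ε > (0 : ℝ), Tendsto (fun n => P {ω | ε ≤ εn n ω}) atTop (𝓝 0)) :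
    ∀ ε > (0 : ℝ), Tendsto (fun n => P {ω | ε ≤ dist (θhat n ω) θ0}) atTop (𝓝 0) := by
  intro ε hε
  obtain ⟨b, hb, hsep⟩ := h2 (Metric.ball θ0 ε) Metric.isOpen_ball (Metric.mem_ball_self hε)
  have hδ : 0 < (M θ0 - b) / 3 := by linarith
  refine tendsto_measure_of_subset_union (h1 _ hδ) (h3tend _ hδ) fun n ω hfar => ?_
  by_contra! hnear
  simp only [Set.mem_union, Set.mem_ofPred_eq, not_or, not_exists, not_le] at hnear
  have hlow := sub_three_mul_lt_of_forall_abs_sub_lt hnear.1 (h3 n ω θ0) hnear.2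
  have hhigh : M (θhat n ω) ≤ b := hsep _ (by simpa using hfar)
  linarith

/-- van der Vaart–Wellner, Corollary 3.2.3: consistency of near-maximizers. -/
theorem argmax_consistency
    {Θ : Type*} [MetricSpace Θ] {Ω : Type*} [MeasurableSpace Ω]
    (P : Measure Ω) [IsProbabilityMeasure P]
    (Mn : ℕ → Ω → Θ → ℝ) (M : Θ → ℝ) (θ0 : Θ)
    (θhat : ℕ → Ω → Θ) (εn : ℕ → Ω → ℝ)
    (hmeasε : ∀ n, Measurable (εn n))
    (hmeasd : ∀ n, Measurable fun ω => dist (θhat n ω) θ0)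
    -- (1) uniform convergence in probability: `sup_θ |M_n(θ) − M(θ)| → 0` in probability
    (h1 : ∀ ε > (0 : ℝ),
      Tendsto (fun n => P {ω | ∃ θ, ε ≤ |Mn n ω θ - M θ|}) atTop (𝓝 0))
    -- (2) well-separated maximum: `M(θ0) > sup_{θ ∉ G} M(θ)` for every open `G ∋ θ0`
    (h2 : ∀ G : Set Θ, IsOpen G → θ0 ∈ G → ∃ b < M θ0, ∀ θ ∉ G, M θ ≤ b)
    -- (3) near-maximization: `M_n(θ̂_n) ≥ sup_θ M_n(θ) − ε_n` with `ε_n ≥ 0`, `ε_n → 0` in prob.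
    (h3pos : ∀ n ω, 0 ≤ εn n ω)
    (h3 : ∀ n ω θ, Mn n ω θ ≤ Mn n ω (θhat n ω) + εn n ω)
    (h3tend : ∀ ε > (0 : ℝ), Tendsto (fun n => P {ω | ε ≤ εn n ω}) atTop (𝓝 0)) :
    ∀ ε > (0 : ℝ), Tendsto (fun n => P {ω | ε ≤ dist (θhat n ω) θ0}) atTop (𝓝 0) :=
  argmax_consistency_general P Mn M θ0 θhat εn h1 h2 h3 h3tend
end

section
/- Suppose F = Σ_{j=1}^k π_j^0 N_p(μ_j^0, Σ_j^0) and π_1^0 = max_{1≤j≤k} π_j^0. Fix c' > 0 and let θ^a be the parameter with π_1 = 1, π_j = 0 for 2 ≤ j ≤ k, μ_1 = μ_1^0, Σ_1 = c'Σ_1^0, and μ_j, Σ_j arbitrary (symmetric positive definite) for j ≥ 2. Then L_β(θ^a, F) ≥ [ β (2π)^{pβ/2} (det(c'Σ_1^0))^{β/2} (1 + β/c')^{p/2} ]^{-1} · [ π_1^0 − (β/(1+β)^{1+p/2}) (1 + β/c')^{p/2} ]. -/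
open MeasureTheory Matrix Filter Topology Finset Real

/-!
All the weight of `θ^a` sits on its first component, whose density is positive, so that component
is the unique maximiser everywhere and `L_β(θ^a, F) = β⁻¹ E_F[φ_a^β] − (1+β)⁻¹ ∫ φ_a^{1+β}` with
`φ_a = φ_p(·, μ₁⁰, c'Σ₁⁰)`. The mixture density dominates `π₁⁰ φ_p(·, μ₁⁰, Σ₁⁰)`, and
`φ_p(·, μ, cΣ)^β φ_p(·, μ, Σ)` is an unnormalised Gaussian with precision `(1 + β/c) Σ⁻¹`, so both
remaining integrals are Gaussian integrals, computed by the substitution `x = μ + Σ^{1/2} v`.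
-/

section GaussianIntegral

variable {ι : Type*} [Fintype ι] {r : ℝ}

lemma exp_neg_mul_dotProduct_self (r : ℝ) (v : ι → ℝ) :
    Real.exp (-r * (v ⬝ᵥ v)) = ∏ i, Real.exp (-r * v i ^ 2) := by
  simp only [dotProduct, Finset.mul_sum, Real.exp_sum, sq]

lemma integrable_exp_neg_mul_dotProduct_self (hr : 0 < r) :
    Integrable fun v : ι → ℝ => Real.exp (-r * (v ⬝ᵥ v)) := by
  simp only [exp_neg_mul_dotProduct_self]
  exact Integrable.fintype_prod (fun _ => integrable_exp_neg_mul_sq hr)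

lemma integral_exp_neg_mul_dotProduct_self (hr : 0 < r) :
    ∫ v : ι → ℝ, Real.exp (-r * (v ⬝ᵥ v)) = (π / r) ^ ((Fintype.card ι : ℝ) / 2) := by
  simp only [exp_neg_mul_dotProduct_self]
  rw [volume_pi, integral_fintype_prod_eq_pow (ι := ι) (fun t : ℝ => Real.exp (-r * t ^ 2)),
    integral_gaussian, Real.sqrt_eq_rpow,
    ← Real.rpow_natCast, ← Real.rpow_mul (by positivity)]
  ring_nf

variable [DecidableEq ι] {E : Type*} [NormedAddCommGroup E]
  {A : Matrix ι ι ℝ}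

noncomputable def mulVecMeasurableEquiv (hA : A.det ≠ 0) : (ι → ℝ) ≃ᵐ (ι → ℝ) :=
  ((Matrix.toLin' A).equivOfDetNeZero (by rwa [LinearMap.det_toLin'])).toContinuousLinearEquiv
    |>.toHomeomorph.toMeasurableEquiv

lemma map_mulVecMeasurableEquiv_volume (hA : A.det ≠ 0) :
    Measure.map (mulVecMeasurableEquiv hA) volume = ENNReal.ofReal |A.det|⁻¹ • volume := by
  rw [← abs_inv]
  exact Real.map_matrix_volume_pi_eq_smul_volume_pi hA

lemma integrable_comp_mulVec_iff (hA : A.det ≠ 0) (g : (ι → ℝ) → E) :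
    Integrable (fun v => g (A *ᵥ v)) ↔ Integrable g := by
  have hc : ENNReal.ofReal |A.det|⁻¹ ≠ 0 := by
    simpa using hA
  change Integrable (g ∘ mulVecMeasurableEquiv hA) volume ↔ _
  rw [← integrable_map_equiv, map_mulVecMeasurableEquiv_volume hA,
    integrable_smul_measure hc ENNReal.ofReal_ne_top]

lemma integral_comp_mulVec [NormedSpace ℝ E] (hA : A.det ≠ 0) (g : (ι → ℝ) → E) :
    ∫ v, g (A *ᵥ v) = |A.det|⁻¹ • ∫ x, g x := by
  rw [← ENNReal.toReal_ofReal (inv_nonneg.2 (abs_nonneg A.det)), ← integral_smul_measure,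
    ← map_mulVecMeasurableEquiv_volume hA, integral_map_equiv]
  rfl

open scoped MatrixOrder

lemma det_sqrt_eq_sqrt_det {S : Matrix ι ι ℝ} (hS : S.PosSemidef) :
    (CFC.sqrt S).det = √S.det := by
  rw [hS.det_sqrt, RCLike.sqrt_real]

lemma sqrt_mulVec_dotProduct_inv_mulVec {S : Matrix ι ι ℝ} (hS : S.PosDef) (v : ι → ℝ) :
    (CFC.sqrt S *ᵥ v) ⬝ᵥ (S⁻¹ *ᵥ (CFC.sqrt S *ᵥ v)) = v ⬝ᵥ v := by
  set A := CFC.sqrt S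
  have hA : IsUnit A.det := by
    rw [det_sqrt_eq_sqrt_det hS.posSemidef]
    exact (Real.sqrt_pos.2 hS.det_pos).ne'.isUnit
  have hAt : Aᵀ = A := (CFC.sqrt_nonneg S).posSemidef.isHermitian
  have hinv : S⁻¹ *ᵥ (A *ᵥ v) = A⁻¹ *ᵥ v := by
    rw [← CFC.sqrt_mul_sqrt_self S hS.posSemidef.nonneg, Matrix.mul_inv_rev, mulVec_mulVec,
      Matrix.mul_assoc, nonsing_inv_mul A hA, Matrix.mul_one]
  rw [hinv, ← hAt, mulVec_transpose, ← dotProduct_mulVec, mulVec_mulVec, hAt,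
    mul_nonsing_inv A hA, one_mulVec]

lemma integrable_exp_neg_mul_dotProduct_inv_mulVec {S : Matrix ι ι ℝ} (hS : S.PosDef)
    (hr : 0 < r) (μ : ι → ℝ) :
    Integrable fun x : ι → ℝ => Real.exp (-r * ((x - μ) ⬝ᵥ (S⁻¹ *ᵥ (x - μ)))) := by
  have hdet : (CFC.sqrt S).det ≠ 0 := by
    rw [det_sqrt_eq_sqrt_det hS.posSemidef]
    exact (Real.sqrt_pos.2 hS.det_pos).ne'
  refine Integrable.comp_sub_right (f := fun x => Real.exp (-r * (x ⬝ᵥ (S⁻¹ *ᵥ x)))) ?_ μ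
  rw [← integrable_comp_mulVec_iff hdet]
  simp only [sqrt_mulVec_dotProduct_inv_mulVec hS]
  exact integrable_exp_neg_mul_dotProduct_self hr

lemma integral_exp_neg_mul_dotProduct_inv_mulVec {S : Matrix ι ι ℝ} (hS : S.PosDef)
    (hr : 0 < r) (μ : ι → ℝ) :
    ∫ x : ι → ℝ, Real.exp (-r * ((x - μ) ⬝ᵥ (S⁻¹ *ᵥ (x - μ))))
      = (π / r) ^ ((Fintype.card ι : ℝ) / 2) * √S.det := by
  have hdet := det_sqrt_eq_sqrt_det hS.posSemidef
  have hpos : 0 < √S.det := Real.sqrt_pos.2 hS.det_pos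
  have h := integral_comp_mulVec (hdet ▸ hpos.ne')
    fun x : ι → ℝ => Real.exp (-r * (x ⬝ᵥ (S⁻¹ *ᵥ x)))
  simp only [sqrt_mulVec_dotProduct_inv_mulVec hS, integral_exp_neg_mul_dotProduct_self hr, hdet,
    abs_of_pos hpos, smul_eq_mul] at h
  rw [integral_sub_right_eq_self (fun x => Real.exp (-r * (x ⬝ᵥ (S⁻¹ *ᵥ x)))) μ, h, mul_comm,
    mul_inv_cancel_left₀ hpos.ne']

end GaussianIntegral

section Mvnpdf

variable {p : ℕ} {x μ : Fin p → ℝ} {S : Matrix (Fin p) (Fin p) ℝ}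

lemma mvnpdf_pos (hS : 0 < S.det) : 0 < mvnpdf p x μ S := by
  unfold mvnpdf
  positivity

@[fun_prop]
lemma continuous_mvnpdf (μ : Fin p → ℝ) (S : Matrix (Fin p) (Fin p) ℝ) :
    Continuous fun x => mvnpdf p x μ S := by
  unfold mvnpdf
  fun_prop

lemma mvnpdf_le (hS : S.PosDef) :
    mvnpdf p x μ S ≤ (2 * π) ^ (-(p : ℝ) / 2) * S.det ^ (-(1 : ℝ) / 2) := by
  have hq : 0 ≤ (x - μ) ⬝ᵥ (S⁻¹ *ᵥ (x - μ)) := by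
    simpa using hS.inv.posSemidef.dotProduct_mulVec_nonneg (x - μ)
  have := hS.det_pos
  unfold mvnpdf
  exact mul_le_of_le_one_right (by positivity) (Real.exp_le_one_iff.2 (by nlinarith))

lemma integrable_mvnpdf_rpow_of_isFiniteMeasure {P : Measure (Fin p → ℝ)} [IsFiniteMeasure P]
    (hS : S.PosDef) (μ : Fin p → ℝ) {t : ℝ} (ht : 0 ≤ t) :
    Integrable (fun x => mvnpdf p x μ S ^ t) P := by
  refine Integrable.of_bound
    ((continuous_mvnpdf μ S).rpow_const fun _ => Or.inr ht).aestronglyMeasurable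
    (((2 * π) ^ (-(p : ℝ) / 2) * S.det ^ (-(1 : ℝ) / 2)) ^ t) (ae_of_all _ fun x => ?_)
  have h0 := (mvnpdf_pos (x := x) (μ := μ) hS.det_pos).le
  rw [Real.norm_of_nonneg (Real.rpow_nonneg h0 t)]
  exact Real.rpow_le_rpow h0 (mvnpdf_le hS) ht

lemma mvnpdf_rpow (hS : 0 < S.det) (t : ℝ) :
    mvnpdf p x μ S ^ t = ((2 * π) ^ ((p : ℝ) * t / 2) * S.det ^ (t / 2))⁻¹
      * Real.exp (-(t / 2) * ((x - μ) ⬝ᵥ (S⁻¹ *ᵥ (x - μ)))) := by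
  have h2π : (0 : ℝ) < 2 * π := by positivity
  unfold mvnpdf
  rw [Real.mul_rpow (by positivity) (Real.exp_pos _).le,
    Real.mul_rpow (Real.rpow_nonneg h2π.le _) (Real.rpow_nonneg hS.le _), ← Real.rpow_mul h2π.le,
    ← Real.rpow_mul hS.le, ← Real.exp_mul, mul_inv, ← Real.rpow_neg h2π.le, ← Real.rpow_neg hS.le]
  ring_nf

lemma det_smul_pos (hS : 0 < S.det) {c : ℝ} (hc : 0 < c) : 0 < (c • S).det := by
  rw [det_smul]; positivity

lemma mvnpdf_smul_rpow_mul_mvnpdf (hS : 0 < S.det) {c : ℝ} (hc : 0 < c) (β : ℝ) :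
    mvnpdf p x μ (c • S) ^ β * mvnpdf p x μ S
      = ((2 * π) ^ ((p : ℝ) * β / 2) * (c • S).det ^ (β / 2))⁻¹
        * ((2 * π) ^ ((p : ℝ) / 2) * S.det ^ ((1 : ℝ) / 2))⁻¹
        * Real.exp (-((1 + β / c) / 2) * ((x - μ) ⬝ᵥ (S⁻¹ *ᵥ (x - μ)))) := by
  have hinv : (c • S)⁻¹ = c⁻¹ • S⁻¹ :=
    inv_eq_left_inv (by rw [smul_mul_smul_comm, nonsing_inv_mul S hS.ne'.isUnit,
      inv_mul_cancel₀ hc.ne', one_smul])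
  have h1 := mvnpdf_rpow (x := x) (μ := μ) hS 1
  rw [Real.rpow_one, mul_one] at h1
  rw [mvnpdf_rpow (det_smul_pos hS hc), h1, hinv, smul_mulVec, dotProduct_smul, smul_eq_mul,
    mul_mul_mul_comm, ← Real.exp_add]
  congr 2
  field_simp
  ring

lemma integrable_mvnpdf_smul_rpow_mul_mvnpdf (hS : S.PosDef) {c β : ℝ} (hc : 0 < c)
    (hβ : 0 < 1 + β / c) (μ : Fin p → ℝ) :
    Integrable fun x => mvnpdf p x μ (c • S) ^ β * mvnpdf p x μ S := by
  simp only [mvnpdf_smul_rpow_mul_mvnpdf hS.det_pos hc]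
  exact (integrable_exp_neg_mul_dotProduct_inv_mulVec hS (by positivity) μ).const_mul _

lemma integral_mvnpdf_smul_rpow_mul_mvnpdf (hS : S.PosDef) {c β : ℝ} (hc : 0 < c)
    (hβ : 0 < 1 + β / c) (μ : Fin p → ℝ) :
    ∫ x, mvnpdf p x μ (c • S) ^ β * mvnpdf p x μ S
      = ((2 * π) ^ ((p : ℝ) * β / 2) * (c • S).det ^ (β / 2) * (1 + β / c) ^ ((p : ℝ) / 2))⁻¹ := by
  have h2π : (0 : ℝ) < 2 * π := by positivity
  simp only [mvnpdf_smul_rpow_mul_mvnpdf hS.det_pos hc]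
  rw [integral_const_mul, integral_exp_neg_mul_dotProduct_inv_mulVec hS (by positivity),
    Fintype.card_fin, show π / ((1 + β / c) / 2) = 2 * π / (1 + β / c) by field_simp,
    Real.div_rpow h2π.le hβ.le, Real.sqrt_eq_rpow]
  have := hS.det_pos
  field_simp

lemma integrable_mvnpdf (hS : S.PosDef) (μ : Fin p → ℝ) :
    Integrable fun x => mvnpdf p x μ S := by
  simpa using integrable_mvnpdf_smul_rpow_mul_mvnpdf hS one_pos (β := 0) (by norm_num) μ

lemma integral_mvnpdf (hS : S.PosDef) (μ : Fin p → ℝ) : ∫ x, mvnpdf p x μ S = 1 := by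
  simpa using integral_mvnpdf_smul_rpow_mul_mvnpdf hS one_pos (β := 0) (by norm_num) μ

lemma Jint_eq (hS : S.PosDef) {β : ℝ} (hβ : 0 < 1 + β) (μ : Fin p → ℝ) :
    Jint p β μ S = ((2 * π) ^ ((p : ℝ) * β / 2) * S.det ^ (β / 2) * (1 + β) ^ ((p : ℝ) / 2))⁻¹ := by
  have h := integral_mvnpdf_smul_rpow_mul_mvnpdf hS one_pos (β := β) (by simpa using hβ) μ
  simp only [one_smul, div_one] at h
  rw [Jint, ← h]
  congr 1 with x
  rw [Real.rpow_add (mvnpdf_pos hS.det_pos), Real.rpow_one, mul_comm]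

end Mvnpdf

section Mixture
variable {p k : ℕ} {w : Fin k → ℝ} {μ : Fin k → Fin p → ℝ} {S : Fin k → Matrix (Fin p) (Fin p) ℝ}

noncomputable def mixDensity (p k : ℕ) (w : Fin k → ℝ) (μ : Fin k → Fin p → ℝ)
    (S : Fin k → Matrix (Fin p) (Fin p) ℝ) (x : Fin p → ℝ) : ℝ :=
  ∑ j, w j * mvnpdf p x (μ j) (S j)

lemma continuous_mixDensity : Continuous (mixDensity p k w μ S) := by
  unfold mixDensity
  fun_prop

lemma mixDensity_nonneg (hw : ∀ j, 0 ≤ w j) (hS : ∀ j, 0 < (S j).det) (x : Fin p → ℝ) :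
    0 ≤ mixDensity p k w μ S x :=
  Finset.sum_nonneg fun j _ => mul_nonneg (hw j) (mvnpdf_pos (hS j)).le

lemma mul_mvnpdf_le_mixDensity (hw : ∀ j, 0 ≤ w j) (hS : ∀ j, 0 < (S j).det) (x : Fin p → ℝ)
    (j : Fin k) : w j * mvnpdf p x (μ j) (S j) ≤ mixDensity p k w μ S x :=
  Finset.single_le_sum (f := fun j => w j * mvnpdf p x (μ j) (S j))
    (fun j _ => mul_nonneg (hw j) (mvnpdf_pos (hS j)).le) (Finset.mem_univ j)

lemma integrable_mixDensity (hS : ∀ j, (S j).PosDef) : Integrable (mixDensity p k w μ S) := by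
  unfold mixDensity
  exact integrable_finsetSum _ fun j _ => (integrable_mvnpdf (hS j) (μ j)).const_mul (w j)

lemma integral_mixDensity (hS : ∀ j, (S j).PosDef) (hw : ∑ j, w j = 1) :
    ∫ x, mixDensity p k w μ S x = 1 := by
  unfold mixDensity
  rw [integral_finsetSum _ fun j _ => (integrable_mvnpdf (hS j) (μ j)).const_mul (w j)]
  simp [integral_const_mul, integral_mvnpdf (hS _), hw]

lemma mixMeasure_eq_withDensity : mixMeasure p k w μ S =
    volume.withDensity fun x => ((mixDensity p k w μ S x).toNNReal : ENNReal) := rfl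

lemma integral_mixMeasure (hw : ∀ j, 0 ≤ w j) (hS : ∀ j, 0 < (S j).det) (g : (Fin p → ℝ) → ℝ) :
    ∫ x, g x ∂mixMeasure p k w μ S = ∫ x, mixDensity p k w μ S x * g x := by
  rw [mixMeasure_eq_withDensity, integral_withDensity_eq_integral_smul
    continuous_mixDensity.measurable.real_toNNReal]
  simp only [NNReal.smul_def, Real.coe_toNNReal _ (mixDensity_nonneg hw hS _), smul_eq_mul]

lemma integrable_mixMeasure_iff (hw : ∀ j, 0 ≤ w j) (hS : ∀ j, 0 < (S j).det)
    (g : (Fin p → ℝ) → ℝ) :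
    Integrable g (mixMeasure p k w μ S) ↔ Integrable fun x => mixDensity p k w μ S x * g x := by
  rw [mixMeasure_eq_withDensity, integrable_withDensity_iff_integrable_smul
    continuous_mixDensity.measurable.real_toNNReal]
  simp only [NNReal.smul_def, Real.coe_toNNReal _ (mixDensity_nonneg hw hS _), smul_eq_mul]

lemma isProbabilityMeasure_mixMeasure (hw : ∀ j, 0 ≤ w j) (hS : ∀ j, (S j).PosDef)
    (hw1 : ∑ j, w j = 1) : IsProbabilityMeasure (mixMeasure p k w μ S) := by
  constructor
  rw [mixMeasure, withDensity_apply _ MeasurableSet.univ, Measure.restrict_univ]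
  change ∫⁻ x, ENNReal.ofReal (mixDensity p k w μ S x) = 1
  rw [← ofReal_integral_eq_lintegral_ofReal (integrable_mixDensity hS)
      (ae_of_all _ (mixDensity_nonneg hw fun j => (hS j).det_pos)), integral_mixDensity hS hw1,
    ENNReal.ofReal_one]

lemma mul_integral_mul_mvnpdf_le_integral_mixMeasure (hw : ∀ j, 0 ≤ w j)
    (hS : ∀ j, 0 < (S j).det) {g : (Fin p → ℝ) → ℝ} (hg0 : 0 ≤ g)
    (hg : Integrable g (mixMeasure p k w μ S)) (j : Fin k) :
    w j * ∫ x, g x * mvnpdf p x (μ j) (S j) ≤ ∫ x, g x ∂mixMeasure p k w μ S := by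
  rw [integral_mixMeasure hw hS, ← integral_const_mul]
  refine integral_mono_of_nonneg (ae_of_all _ fun x => ?_)
    ((integrable_mixMeasure_iff hw hS g).1 hg) (ae_of_all _ fun x => ?_)
  · exact mul_nonneg (hw j) (mul_nonneg (hg0 x) (mvnpdf_pos (hS j)).le)
  · change w j * (g x * _) ≤ mixDensity p k w μ S x * g x
    rw [mul_left_comm, mul_comm]
    exact mul_le_mul_of_nonneg_right (mul_mvnpdf_le_mixDensity hw hS x j) (hg0 x)

end Mixture

section SingleComponent
variable {p k : ℕ} {θ : MixParam p k} {j₀ : Fin k}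

lemma isArgMax_iff_of_weights_eq_single (hθ : θ.1 = Pi.single j₀ 1) (hS : 0 < (θ.2.2 j₀).det)
    (x : Fin p → ℝ) (j : Fin k) : IsArgMax p k θ x j ↔ j = j₀ := by
  have hD : ∀ i, Dj p k θ x i = if i = j₀ then mvnpdf p x (θ.2.1 j₀) (θ.2.2 j₀) else 0 := by
    intro i
    by_cases hi : i = j₀ <;> simp [Dj, hθ, hi]
  have hpos := mvnpdf_pos (x := x) (μ := θ.2.1 j₀) hS
  constructor
  · intro h
    by_contra hj
    have := h j₀
    simp only [hD, hj, if_true, if_false] at this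
    linarith
  · rintro rfl i
    simp only [hD, if_true]
    split_ifs <;> linarith

lemma mfun_of_weights_eq_single (hθ : θ.1 = Pi.single j₀ 1) (hS : 0 < (θ.2.2 j₀).det) (β : ℝ)
    (x : Fin p → ℝ) :
    mfun p k β θ x = 1 / β * mvnpdf p x (θ.2.1 j₀) (θ.2.2 j₀) ^ β
      - 1 / (1 + β) * Jint p β (θ.2.1 j₀) (θ.2.2 j₀) := by
  simp [mfun, isArgMax_iff_of_weights_eq_single hθ hS, hθ]

lemma Lbeta_of_weights_eq_single (hθ : θ.1 = Pi.single j₀ 1) (hS : (θ.2.2 j₀).PosDef) {β : ℝ}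
    (hβ : 0 ≤ β) (P : Measure (Fin p → ℝ)) [IsProbabilityMeasure P] :
    Lbeta p k β θ P = 1 / β * ∫ x, mvnpdf p x (θ.2.1 j₀) (θ.2.2 j₀) ^ β ∂P
      - 1 / (1 + β) * Jint p β (θ.2.1 j₀) (θ.2.2 j₀) := by
  simp only [Lbeta, mfun_of_weights_eq_single hθ hS.det_pos]
  rw [integral_sub ((integrable_mvnpdf_rpow_of_isFiniteMeasure hS _ hβ).const_mul _)
    (integrable_const _), integral_const_mul, integral_const, probReal_univ, one_smul]

lemma Lbeta_mixMeasure_ge_of_weights_eq_single {w : Fin k → ℝ} {μ : Fin k → Fin p → ℝ}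
    {S : Fin k → Matrix (Fin p) (Fin p) ℝ} {c β : ℝ} (hθ : θ.1 = Pi.single j₀ 1)
    (hθμ : θ.2.1 j₀ = μ j₀) (hθS : θ.2.2 j₀ = c • S j₀) (hw : ∀ j, 0 ≤ w j)
    (hw1 : ∑ j, w j = 1) (hS : ∀ j, (S j).PosDef) (hc : 0 < c) (hβ : 0 < β) :
    1 / β * (w j₀ * ((2 * π) ^ ((p : ℝ) * β / 2) * (c • S j₀).det ^ (β / 2)
        * (1 + β / c) ^ ((p : ℝ) / 2))⁻¹)
      - 1 / (1 + β) * ((2 * π) ^ ((p : ℝ) * β / 2) * (c • S j₀).det ^ (β / 2)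
        * (1 + β) ^ ((p : ℝ) / 2))⁻¹
      ≤ Lbeta p k β θ (mixMeasure p k w μ S) := by
  have hSc : (c • S j₀).PosDef := (hS j₀).smul hc
  have := isProbabilityMeasure_mixMeasure (μ := μ) hw hS hw1
  have hmix := mul_integral_mul_mvnpdf_le_integral_mixMeasure (μ := μ) hw
    (fun j => (hS j).det_pos) (fun x => Real.rpow_nonneg (mvnpdf_pos hSc.det_pos).le β)
    (integrable_mvnpdf_rpow_of_isFiniteMeasure hSc (μ j₀) hβ.le) j₀
  rw [integral_mvnpdf_smul_rpow_mul_mvnpdf (hS j₀) hc (by positivity)] at hmix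
  rw [Lbeta_of_weights_eq_single hθ (hθS ▸ hSc) hβ.le, hθμ, hθS, Jint_eq hSc (by positivity)]
  gcongr

end SingleComponent

theorem Lbeta_theta_a_lower_bound_general
    (p k : ℕ) (hk : 0 < k) (β : ℝ) (hβ : 0 < β)
    (w0 : Fin k → ℝ) (mu0 : Fin k → Fin p → ℝ) (S0 : Fin k → Matrix (Fin p) (Fin p) ℝ)
    (hw0 : ∀ j, 0 ≤ w0 j ∧ w0 j ≤ 1) (hw0sum : (∑ j, w0 j) = 1)
    (hS0 : ∀ j, (S0 j).PosDef)
    (c' : ℝ) (hc' : 0 < c')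
    -- arbitrary remaining components of θ^a
    (muArb : Fin k → Fin p → ℝ) (SArb : Fin k → Matrix (Fin p) (Fin p) ℝ) :
    (β * (2 * π) ^ ((p : ℝ) * β / 2) * (c' • S0 ⟨0, hk⟩).det ^ (β / 2) *
        (1 + β / c') ^ ((p : ℝ) / 2))⁻¹ *
      (w0 ⟨0, hk⟩ - β / (1 + β) ^ (1 + (p : ℝ) / 2) * (1 + β / c') ^ ((p : ℝ) / 2)) ≤
    Lbeta p k β
      (fun j => if j = ⟨0, hk⟩ then 1 else 0,
       fun j => if j = ⟨0, hk⟩ then mu0 ⟨0, hk⟩ else muArb j,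
       fun j => if j = ⟨0, hk⟩ then c' • S0 ⟨0, hk⟩ else SArb j)
      (mixMeasure p k w0 mu0 S0) := by
  have h1β : 0 < 1 + β := by positivity
  have := ((hS0 ⟨0, hk⟩).smul hc').det_pos
  refine le_of_eq_of_le ?_ (Lbeta_mixMeasure_ge_of_weights_eq_single
    (funext fun j => (Pi.single_apply ⟨0, hk⟩ (1 : ℝ) j).symm) (by simp) (by simp)
    (fun j => (hw0 j).1) hw0sum hS0 hc' hβ)
  rw [Real.rpow_add h1β, Real.rpow_one]
  field_simp

/-- lower bound on `L_β(θ^a, F)` for the degenerate parameter `θ^a` with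
`π₁ = 1`, `μ₁ = μ₁⁰`, `Σ₁ = c'Σ₁⁰`. -/
theorem Lbeta_theta_a_lower_bound
    (p k : ℕ) (hp : 0 < p) (hk : 0 < k) (β : ℝ) (hβ : 0 < β)
    (w0 : Fin k → ℝ) (mu0 : Fin k → Fin p → ℝ) (S0 : Fin k → Matrix (Fin p) (Fin p) ℝ)
    (hw0 : ∀ j, 0 ≤ w0 j ∧ w0 j ≤ 1) (hw0sum : (∑ j, w0 j) = 1)
    (hS0 : ∀ j, (S0 j).PosDef)
    -- the first component has the largest mixing weight: `π₁⁰ = max_j π_j⁰`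
    (hmaxw : ∀ j, w0 j ≤ w0 ⟨0, hk⟩)
    (c' : ℝ) (hc' : 0 < c')
    -- arbitrary remaining components of θ^a
    (muArb : Fin k → Fin p → ℝ) (SArb : Fin k → Matrix (Fin p) (Fin p) ℝ)
    (hSArb : ∀ j, (SArb j).PosDef) :
    (β * (2 * π) ^ ((p : ℝ) * β / 2) * (c' • S0 ⟨0, hk⟩).det ^ (β / 2) *
        (1 + β / c') ^ ((p : ℝ) / 2))⁻¹ *
      (w0 ⟨0, hk⟩ - β / (1 + β) ^ (1 + (p : ℝ) / 2) * (1 + β / c') ^ ((p : ℝ) / 2)) ≤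
    Lbeta p k β
      (fun j => if j = ⟨0, hk⟩ then 1 else 0,
       fun j => if j = ⟨0, hk⟩ then mu0 ⟨0, hk⟩ else muArb j,
       fun j => if j = ⟨0, hk⟩ then c' • S0 ⟨0, hk⟩ else SArb j)
      (mixMeasure p k w0 mu0 S0) :=
  Lbeta_theta_a_lower_bound_general p k hk β hβ w0 mu0 S0 hw0 hw0sum hS0 c' hc' muArb SArb
end

section
/- Extend the definitions of D_j, Z_j and L_β to generalized parameters whose mixing weights π_j ≥ 0 need not sum to 1. Let θ be a generalized parameter with π_j > 0 for 1 ≤ j ≤ g and π_j = 0 for g < j ≤ k, where 0 < s := Σ_{j=1}^g π_j < 1, and let θ' be the parameter with the same means and dispersion matrices and weights π_j' = π_j/s for j ≤ g and π_j' = 0 for j > g. Then: (i) Z_j(x, θ') = Z_j(x, θ) for every x ∈ ℝ^p and every 1 ≤ j ≤ k; and (ii) for any probability distribution F on ℝ^p for which L_β(θ, F) is finite, L_β(θ, F) < L_β(θ', F). -/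
open MeasureTheory Matrix Filter Topology Finset Real

section myaux

lemma my_mvnpdf_pos (p : ℕ) (x μ : Fin p → ℝ) {S : Matrix (Fin p) (Fin p) ℝ}
    (hS : S.PosDef) : 0 < mvnpdf p x μ S := by
  unfold mvnpdf
  have h1 : (0:ℝ) < 2 * π := by positivity
  have h2 : (0:ℝ) < S.det := hS.det_pos
  positivity

lemma my_mvnpdf_continuous (p : ℕ) (μ : Fin p → ℝ) (S : Matrix (Fin p) (Fin p) ℝ) :
    Continuous fun x => mvnpdf p x μ S := by
  simp only [mvnpdf, Matrix.mulVec, dotProduct]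
  fun_prop

lemma my_Dj_measurable (p k : ℕ) (θ : MixParam p k) (j : Fin k) :
    Measurable fun x => Dj p k θ x j := by
  unfold Dj
  exact (continuous_const.mul (my_mvnpdf_continuous p _ _)).measurable

lemma my_argmax_measurable (p k : ℕ) (θ : MixParam p k) (j : Fin k) :
    MeasurableSet {x | IsArgMax p k θ x j} := by
  have h : {x | IsArgMax p k θ x j} = ⋂ i, {x | Dj p k θ x i ≤ Dj p k θ x j} := by
    ext x; simp [IsArgMax, Set.mem_iInter]
  rw [h]
  exact MeasurableSet.iInter fun i =>
    measurableSet_le (my_Dj_measurable p k θ i) (my_Dj_measurable p k θ j)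

end myaux

/-- standardizing the mixing weights keeps the assignment functions
unchanged and strictly increases the pseudo β-likelihood. -/
theorem standardized_weights_increase_Lbeta
    (p k : ℕ) (hp : 0 < p) (hk : 0 < k) (β : ℝ) (hβ : 0 < β)
    -- θ is a generalized parameter: π_j > 0 for j ≤ g, π_j = 0 for j > g
    (θ : MixParam p k) (hpd : ∀ j, (θ.2.2 j).PosDef)
    (g : ℕ) (hgk : g ≤ k)
    (hwpos : ∀ j : Fin k, (j : ℕ) < g → 0 < θ.1 j)
    (hwzero : ∀ j : Fin k, g ≤ (j : ℕ) → θ.1 j = 0)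
    (s : ℝ) (hs : s = ∑ j, θ.1 j) (hs0 : 0 < s) (hs1 : s < 1) :
    -- (i) the assignment functions are unchanged
    (∀ (x : Fin p → ℝ) (j : Fin k),
      IsArgMax p k (fun i => θ.1 i / s, θ.2.1, θ.2.2) x j ↔ IsArgMax p k θ x j) ∧
    -- (ii) the pseudo β-likelihood strictly increases
    (∀ F : Measure (Fin p → ℝ), IsProbabilityMeasure F →
      Integrable (mfun p k β θ) F →
      Lbeta p k β θ F < Lbeta p k β (fun i => θ.1 i / s, θ.2.1, θ.2.2) F) := by
  classical
  set θ' : MixParam p k := (fun i => θ.1 i / s, θ.2.1, θ.2.2) with hθ'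
  -- basic facts
  have hg0 : ∃ j0 : Fin k, 0 < θ.1 j0 := by
    by_contra h
    push_neg at h
    have hz : ∀ j, θ.1 j = 0 := by
      intro j
      by_cases hj : (j : ℕ) < g
      · exact absurd (hwpos j hj) (not_lt.2 (h j))
      · exact hwzero j (le_of_not_gt hj)
    rw [hs] at hs0
    simp [hz] at hs0
  have hDj : ∀ (x : Fin p → ℝ) (i : Fin k),
      Dj p k θ' x i = Dj p k θ x i / s := by
    intro x i
    simp only [hθ', Dj]
    ring
  have hiff : ∀ (x : Fin p → ℝ) (j : Fin k),
      IsArgMax p k θ' x j ↔ IsArgMax p k θ x j := by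
    intro x j
    unfold IsArgMax
    simp only [hDj]
    exact forall_congr' fun i => div_le_div_iff_of_pos_right hs0
  refine ⟨hiff, ?_⟩
  -- argmax components have positive weight
  have hpos : ∀ (x : Fin p → ℝ) (j : Fin k), IsArgMax p k θ x j → 0 < θ.1 j := by
    intro x j hmax
    obtain ⟨j0, hj0⟩ := hg0
    have h1 : 0 < Dj p k θ x j0 := mul_pos hj0 (my_mvnpdf_pos p x _ (hpd j0))
    have h3 : 0 < Dj p k θ x j := lt_of_lt_of_le h1 (hmax j0)
    by_contra h
    push_neg at h
    have hpdf := my_mvnpdf_pos p x (θ.2.1 j) (hpd j)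
    unfold Dj at h3
    nlinarith
  intro F hF hintθ
  set c : ℝ := -Real.log s with hc
  have hcpos : 0 < c := by
    have := Real.log_neg hs0 hs1
    simp [hc]; linarith
  set hdiff : (Fin p → ℝ) → ℝ :=
    fun x => ∑ j : Fin k, if IsArgMax p k θ x j then c else 0 with hhd
  have hmfun : ∀ x, mfun p k β θ' x = mfun p k β θ x + hdiff x := by
    intro x
    unfold mfun
    rw [hhd, ← Finset.sum_add_distrib]
    apply Finset.sum_congr rfl
    intro j _
    by_cases hj : IsArgMax p k θ x j
    · rw [if_pos ((hiff x j).mpr hj), if_pos hj, if_pos hj]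
      have hlog : Real.log (θ'.1 j) = Real.log (θ.1 j) - Real.log s := by
        simp only [hθ']
        exact Real.log_div (ne_of_gt (hpos x j hj)) (ne_of_gt hs0)
      simp only [hθ'] at hlog ⊢
      rw [hlog]
      ring
    · rw [if_neg ((not_iff_not.mpr (hiff x j)).mpr hj), if_neg hj, if_neg hj]
      ring
  have hge : ∀ x, c ≤ hdiff x := by
    intro x
    obtain ⟨j, -, hj⟩ := Finset.exists_max_image Finset.univ (Dj p k θ x)
      ⟨⟨0, hk⟩, Finset.mem_univ _⟩
    have hjmax : IsArgMax p k θ x j := fun i => hj i (Finset.mem_univ i)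
    have hterm : (if IsArgMax p k θ x j then c else 0) = c := if_pos hjmax
    calc c = (if IsArgMax p k θ x j then c else 0) := hterm.symm
      _ ≤ hdiff x := by
        apply Finset.single_le_sum (f := fun j => if IsArgMax p k θ x j then c else 0)
          (fun i _ => by positivity) (Finset.mem_univ j)
  have hint : Integrable hdiff F := by
    apply integrable_finset_sum
    intro j _
    have heq : (fun x => if IsArgMax p k θ x j then c else 0)
        = Set.indicator {x | IsArgMax p k θ x j} (fun _ => c) := by
      ext x
      simp [Set.indicator_apply]
    rw [heq]
    exact (integrable_const c).indicator (my_argmax_measurable p k θ j)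
  have h1 : Lbeta p k β θ' F = Lbeta p k β θ F + ∫ x, hdiff x ∂F := by
    unfold Lbeta
    rw [show (fun x => mfun p k β θ' x) = fun x => mfun p k β θ x + hdiff x from
      funext hmfun]
    exact integral_add hintθ hint
  have h2 : c ≤ ∫ x, hdiff x ∂F := by
    calc c = ∫ _x, c ∂F := by simp
      _ ≤ ∫ x, hdiff x ∂F := integral_mono (integrable_const c) hint hge
  have : Lbeta p k β θ F < Lbeta p k β θ' F := by
    rw [h1]; linarith
  exact this
end
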